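/- Every level-1 network is a strong lca-network; in particular, in a level-1 network N on X, every nonempty subset A ⊆ X has a unique least common ancestor lca(A), and there exist x, y ∈ A with lca({x,y}) = lca(A). -/

import Mathlib

namespace PhyloNet

/-- A (rooted) network on a set `X` of taxa: a finite directed acyclic graph with a
unique vertex of indegree 0 (the root), whose vertices of outdegree 0 (the leaves)
are exactly the elements of `X` (via the injection `leafEmb`). -/
structure Network (X : Type) where
  V : Type
  [fintypeV : Fintype V]
  E : V → V → Prop
  leafEmb : X → V
  leafEmb_inj : Function.Injective leafEmb
  acyclic : ∀ u v : V, E u v → ¬ Relation.ReflTransGen E v u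
  root_unique : ∃! r : V, ∀ u : V, ¬ E u r
  leaf_iff : ∀ v : V, (∀ w : V, ¬ E v w) ↔ ∃ x : X, leafEmb x = v

attribute [instance] Network.fintypeV

variable {X : Type}

namespace Network

/-- `reach u v` : there is a directed path (possibly trivial) from `u` to `v`,
i.e. `v ⪯ u`. -/
def reach (N : Network X) : N.V → N.V → Prop := Relation.ReflTransGen N.E

/-- The cluster of a vertex: the set of leaves reachable from it. -/
def cluster (N : Network X) (v : N.V) : Set X := {x | N.reach v (N.leafEmb x)}

/-- The clustering system of a network. -/
def CS (N : Network X) : Set (Set X) := Set.range N.cluster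

noncomputable def inDeg (N : Network X) (v : N.V) : ℕ := {u | N.E u v}.ncard
noncomputable def outDeg (N : Network X) (v : N.V) : ℕ := {w | N.E v w}.ncard

def IsHybrid (N : Network X) (v : N.V) : Prop := 1 < N.inDeg v
def IsTreeVertex (N : Network X) (v : N.V) : Prop := N.inDeg v ≤ 1
def IsLeaf (N : Network X) (v : N.V) : Prop := ∀ w : N.V, ¬ N.E v w

/-- The arc `(u,w)` is a shortcut: `w ≺ v` for some child `v ≠ w` of `u`. -/
def IsShortcut (N : Network X) (u w : N.V) : Prop :=
  N.E u w ∧ ∃ v : N.V, N.E u v ∧ v ≠ w ∧ N.reach v w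

def ShortcutFree (N : Network X) : Prop := ∀ u w : N.V, ¬ N.IsShortcut u w

/-- Path-cluster comparability. -/
def PCC (N : Network X) : Prop :=
  ∀ u v : N.V, (N.reach u v ∨ N.reach v u) ↔
    (N.cluster u ⊆ N.cluster v ∨ N.cluster v ⊆ N.cluster u)

def SemiRegular (N : Network X) : Prop := N.ShortcutFree ∧ N.PCC

/-- `N` is regular iff `v ↦ C(v)` is a digraph isomorphism onto the Hasse diagram
of `𝒞_N` (ordered by inclusion). -/
def Regular (N : Network X) : Prop :=
  Function.Injective N.cluster ∧
  ∀ u v : N.V, N.E u v ↔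
    (N.cluster v ⊂ N.cluster u ∧
      ¬ ∃ w : N.V, N.cluster v ⊂ N.cluster w ∧ N.cluster w ⊂ N.cluster u)

def Separated (N : Network X) : Prop := ∀ v : N.V, N.IsHybrid v → N.outDeg v = 1

def Phylogenetic (N : Network X) : Prop := ¬ ∃ v : N.V, N.outDeg v = 1 ∧ N.inDeg v ≤ 1

def Binary (N : Network X) : Prop :=
  (∀ v : N.V, N.IsTreeVertex v → (N.IsLeaf v ∨ N.outDeg v = 2)) ∧
  (∀ v : N.V, N.IsHybrid v → N.inDeg v = 2 ∧ N.outDeg v = 1)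

def TreeChild (N : Network X) : Prop :=
  ∀ v : N.V, ¬ N.IsLeaf v → ∃ u : N.V, N.E v u ∧ N.inDeg u = 1

/-- The underlying undirected (simple) graph of a network. -/
def UG (N : Network X) : SimpleGraph N.V where
  Adj u v := u ≠ v ∧ (N.E u v ∨ N.E v u)
  symm := ⟨fun _ _ h => ⟨Ne.symm h.1, Or.symm h.2⟩⟩
  loopless := ⟨fun _ h => h.1 rfl⟩

/-- A set of vertices is biconnected if it induces a connected undirected graph
with no cutvertex. -/
def IsBiconn (N : Network X) (B : Set N.V) : Prop :=
  (N.UG.induce B).Connected ∧ ∀ v ∈ B, (N.UG.induce (B \ {v})).Preconnected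

/-- A block: a maximal biconnected set of vertices. -/
def IsBlock (N : Network X) (B : Set N.V) : Prop :=
  N.IsBiconn B ∧ ∀ B' : Set N.V, B ⊆ B' → N.IsBiconn B' → B' = B

/-- The set `B` contains an undirected cycle (`B` is a non-trivial block when it is
a block). -/
def HasCycleIn (N : Network X) (B : Set N.V) : Prop :=
  ∃ (v : N.V) (c : N.UG.Walk v v), c.IsCycle ∧ ∀ w ∈ c.support, w ∈ B

/-- Level-1: each block contains at most one hybrid vertex that is not
`⪯`-maximal in the block. -/
def Level1 (N : Network X) : Prop :=
  ∀ B : Set N.V, N.IsBlock B →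
    Set.Subsingleton {v : N.V | v ∈ B ∧ N.IsHybrid v ∧ ∃ u ∈ B, u ≠ v ∧ N.reach u v}

/-- The set `B` (with the edges of the underlying undirected graph between its
members) is exactly an undirected cycle. -/
def IsCycleSet (N : Network X) (B : Set N.V) : Prop :=
  ∃ (v : N.V) (c : N.UG.Walk v v), c.IsCycle ∧ (∀ w : N.V, w ∈ c.support ↔ w ∈ B) ∧
    ∀ u w : N.V, (N.UG.Adj u w ∧ u ∈ B ∧ w ∈ B) ↔ s(u, w) ∈ c.edges

/-- A galled tree: every non-trivial block is an undirected cycle. -/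
def GalledTree (N : Network X) : Prop :=
  ∀ B : Set N.V, N.IsBlock B → N.HasCycleIn B → N.IsCycleSet B

/-- Quasi-binary: hybrid vertices have indegree 2 and outdegree 1, and the
`⪯`-maximal vertex of every non-trivial block has outdegree 2. -/
def QuasiBinary (N : Network X) : Prop :=
  (∀ v : N.V, N.IsHybrid v → N.inDeg v = 2 ∧ N.outDeg v = 1) ∧
  ∀ B : Set N.V, N.IsBlock B → N.HasCycleIn B →
    ∀ v ∈ B, (∀ u ∈ B, N.reach u v → u = v) → N.outDeg v = 2

/-- `LCA A`: the `⪯`-minimal vertices among the common ancestors of `A`. -/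
def LCA (N : Network X) (A : Set X) : Set N.V :=
  {v : N.V | A ⊆ N.cluster v ∧ ∀ u : N.V, A ⊆ N.cluster u → N.reach v u → u = v}

/-- An lca-network: every nonempty set of leaves has a unique least common
ancestor. -/
def LcaNetwork (N : Network X) : Prop :=
  ∀ A : Set X, A.Nonempty → ∃ v : N.V, N.LCA A = {v}

/-- A strong lca-network. -/
def StrongLca (N : Network X) : Prop :=
  N.LcaNetwork ∧
  ∀ A : Set X, A.Nonempty → ∃ x ∈ A, ∃ y ∈ A, N.LCA ({x, y} : Set X) = N.LCA A

/-- Cluster networks in the sense of Huson & Rupp. -/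
def ClusterNetwork (N : Network X) : Prop :=
  N.PCC ∧
  (∀ u v : N.V, N.cluster u = N.cluster v ↔
    (u = v ∨ (N.IsHybrid v ∧ N.E v u) ∨ (N.IsHybrid u ∧ N.E u v))) ∧
  (∀ u v : N.V, N.E v u →
    ¬ ∃ w : N.V, N.cluster u ⊂ N.cluster w ∧ N.cluster w ⊂ N.cluster v) ∧
  (∀ v : N.V, N.IsHybrid v →
    ∃ u : N.V, N.E v u ∧ (∀ w : N.V, N.E v w → w = u) ∧ N.IsTreeVertex u)

/-- The multiplicity of a cluster in the cluster multiset `𝓜_N`. -/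
noncomputable def multiplicity (N : Network X) (C : Set X) : ℕ :=
  Nat.card {v : N.V // N.cluster v = C}

/-- Isomorphism of networks on the same leaf set `X`, fixing every leaf. -/
def Isomorphic (N N' : Network X) : Prop :=
  ∃ φ : N.V ≃ N'.V, (∀ u v : N.V, N.E u v ↔ N'.E (φ u) (φ v)) ∧
    ∀ x : X, φ (N.leafEmb x) = N'.leafEmb x

end Network

/-- A clustering system on `X`. -/
def IsClusteringSystem {X : Type} (𝒞 : Set (Set X)) : Prop :=
  ∅ ∉ 𝒞 ∧ Set.univ ∈ 𝒞 ∧ ∀ x : X, {x} ∈ 𝒞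

/-- Two sets overlap if `A ∩ B ∉ {∅, A, B}`. -/
def Overlap {X : Type} (A B : Set X) : Prop :=
  (A ∩ B).Nonempty ∧ A ∩ B ≠ A ∧ A ∩ B ≠ B

/-- Closed (under pairwise nonempty intersections). -/
def IsClosedCS {X : Type} (𝒞 : Set (Set X)) : Prop :=
  ∀ A ∈ 𝒞, ∀ B ∈ 𝒞, (A ∩ B).Nonempty → A ∩ B ∈ 𝒞

/-- Property (L). -/
def PropertyL {X : Type} (𝒞 : Set (Set X)) : Prop :=
  ∀ C₁ ∈ 𝒞, ∀ C₂ ∈ 𝒞, ∀ C₃ ∈ 𝒞, Overlap C₁ C₂ → Overlap C₁ C₃ → C₁ ∩ C₂ = C₁ ∩ C₃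

/-- Weak hierarchy. -/
def WeakHierarchy {X : Type} (𝒞 : Set (Set X)) : Prop :=
  ∀ C₁ ∈ 𝒞, ∀ C₂ ∈ 𝒞, ∀ C₃ ∈ 𝒞,
    C₁ ∩ C₂ ∩ C₃ = C₁ ∩ C₂ ∨ C₁ ∩ C₂ ∩ C₃ = C₁ ∩ C₃ ∨
    C₁ ∩ C₂ ∩ C₃ = C₂ ∩ C₃ ∨ C₁ ∩ C₂ ∩ C₃ = ∅

/-- Property (N3O): no three distinct pairwise overlapping clusters. -/
def N3O {X : Type} (𝒞 : Set (Set X)) : Prop :=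
  ¬ ∃ C₁ ∈ 𝒞, ∃ C₂ ∈ 𝒞, ∃ C₃ ∈ 𝒞,
    C₁ ≠ C₂ ∧ C₁ ≠ C₃ ∧ C₂ ≠ C₃ ∧ Overlap C₁ C₂ ∧ Overlap C₁ C₃ ∧ Overlap C₂ C₃

/-- Property (2-Inc). -/
def TwoInc {X : Type} (𝒞 : Set (Set X)) : Prop :=
  ∀ C ∈ 𝒞,
    {A : Set X | A ∈ 𝒞 ∧ A ⊂ C ∧ ∀ B ∈ 𝒞, B ⊂ C → A ⊆ B → A = B}.ncard ≤ 2 ∧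
    {A : Set X | A ∈ 𝒞 ∧ C ⊂ A ∧ ∀ B ∈ 𝒞, C ⊂ B → B ⊆ A → A = B}.ncard ≤ 2

/-- The intersection closure: all nonempty intersections of nonempty subfamilies. -/
def interClosure {X : Type} (𝒞 : Set (Set X)) : Set (Set X) :=
  {A : Set X | A.Nonempty ∧ ∃ S : Set (Set X), S ⊆ 𝒞 ∧ S.Nonempty ∧ A = ⋂₀ S}

end PhyloNet

/-!
Two incomparable vertices `p`, `q` of a level-1 network have at most one maximal common
descendant. If `w` forks into internally disjoint paths to `p` and `q`, these paths followed by
paths from `p` and `q` to a maximal common descendant `m` are two internally disjoint paths from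
`w` to `m`; they span a biconnected set in which `m` is a hybrid below `p`. Two maximal common
descendants would put two such hybrids into one block.

Two distinct minimal common ancestors of `A` are incomparable, and their unique maximal common
descendant lies above every leaf of `A`, contradicting minimality; so `lca A` exists. If no pair
of `A` has lca `v = lca A`, every pair lies below a child of `v` that is not below another child,
and no such child lies above all of `A`. Choosing among these children `d₀, d₁, d₂` and leaves
`a ∈ C(d₀) ∩ C(d₁)`, `b ∈ C(d₀) ∩ C(d₂) \ C(d₁)` contradicts uniqueness: `v` forks into `d₀, d₁`
and into `d₀, d₂`, so the maximal common descendant of `d₀, d₁` above `a`, which lies below `d₁`,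
equals that of `d₀, d₂` above `b`.
-/

namespace SimpleGraph

variable {V : Type*} {G : SimpleGraph V}

lemma Walk.IsPath.exists_walk_to_end_avoiding [DecidableEq V] {s t x v : V} {p : G.Walk s t}
    (hp : p.IsPath) (hx : x ∈ p.support) (hxv : x ≠ v) :
    ∃ e, (e = s ∨ e = t) ∧ ∃ q : G.Walk x e, ∀ z ∈ q.support, z ∈ p.support ∧ z ≠ v := by
  by_cases hv : v ∈ (p.takeUntil x hx).support
  · refine ⟨t, Or.inr rfl, p.dropUntil x hx,
      fun z hz => ⟨p.support_dropUntil_subset_support hx hz, ?_⟩⟩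
    rintro rfl
    have hnodup := hp.support_nodup
    rw [← p.take_spec hx, Walk.support_append] at hnodup
    rw [← Walk.cons_tail_support] at hz
    exact List.disjoint_of_nodup_append hnodup hv ((List.mem_cons.1 hz).resolve_left hxv.symm)
  · refine ⟨s, Or.inl rfl, (p.takeUntil x hx).reverse, fun z hz => ?_⟩
    rw [Walk.support_reverse, List.mem_reverse] at hz
    exact ⟨p.support_takeUntil_subset_support hx hz, fun h => hv (h ▸ hz)⟩

lemma Walk.IsPath.induce_union_diff_preconnected [DecidableEq V] {s t : V} {p q : G.Walk s t}
    (hp : p.IsPath) (hq : q.IsPath) (hpq : ∀ z ∈ p.support, z ∈ q.support → z = s ∨ z = t)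
    (v : V) : (G.induce (({z | z ∈ p.support} ∪ {z | z ∈ q.support}) \ {v})).Preconnected := by
  set T := ({z | z ∈ p.support} ∪ {z | z ∈ q.support}) \ {v}
  have reachable_of_walk : ∀ {a b} (w : G.Walk a b) (hw : ∀ z ∈ w.support, z ∈ T),
      (G.induce T).Reachable ⟨a, hw a w.start_mem_support⟩ ⟨b, hw b w.end_mem_support⟩ :=
    fun w hw => ⟨w.induce T hw⟩
  have to_end : ∀ x (hx : x ∈ T), ∃ e, ∃ he : e ∈ T, (e = s ∨ e = t) ∧
      (G.induce T).Reachable ⟨x, hx⟩ ⟨e, he⟩ := by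
    rintro x ⟨hx | hx, hxv⟩
    · obtain ⟨e, he, w, hw⟩ := hp.exists_walk_to_end_avoiding hx hxv
      have hwT : ∀ z ∈ w.support, z ∈ T := fun z hz => ⟨Or.inl (hw z hz).1, (hw z hz).2⟩
      exact ⟨e, hwT e w.end_mem_support, he, reachable_of_walk w hwT⟩
    · obtain ⟨e, he, w, hw⟩ := hq.exists_walk_to_end_avoiding hx hxv
      have hwT : ∀ z ∈ w.support, z ∈ T := fun z hz => ⟨Or.inr (hw z hz).1, (hw z hz).2⟩
      exact ⟨e, hwT e w.end_mem_support, he, reachable_of_walk w hwT⟩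
  -- `v` is an inner vertex of at most one of the two paths; the other one joins `s` and `t`.
  have hst : ∀ (hs : s ∈ T) (ht : t ∈ T), (G.induce T).Reachable ⟨s, hs⟩ ⟨t, ht⟩ := by
    intro hs ht
    have hsv : s ≠ v := hs.2
    have htv : t ≠ v := ht.2
    by_cases hvp : v ∈ p.support
    · have hvq : v ∉ q.support := fun hvq =>
        (hpq v hvp hvq).elim (fun h => hsv h.symm) (fun h => htv h.symm)
      exact reachable_of_walk q fun z hz => ⟨Or.inr hz, fun h => hvq (h ▸ hz)⟩
    · exact reachable_of_walk p fun z hz => ⟨Or.inl hz, fun h => hvp (h ▸ hz)⟩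
  have ends : ∀ e₁ e₂ (h₁ : e₁ ∈ T) (h₂ : e₂ ∈ T), (e₁ = s ∨ e₁ = t) → (e₂ = s ∨ e₂ = t) →
      (G.induce T).Reachable ⟨e₁, h₁⟩ ⟨e₂, h₂⟩ := by
    rintro e₁ e₂ h₁ h₂ (rfl | rfl) (rfl | rfl)
    exacts [.rfl, hst h₁ h₂, (hst h₂ h₁).symm, .rfl]
  rintro ⟨x, hx⟩ ⟨y, hy⟩
  obtain ⟨e₁, h₁, he₁, hx₁⟩ := to_end x hx
  obtain ⟨e₂, h₂, he₂, hy₂⟩ := to_end y hy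
  exact hx₁.trans ((ends e₁ e₂ h₁ h₂ he₁ he₂).trans hy₂.symm)

end SimpleGraph

lemma exists_triple_of_pairwise_cover {ι α : Type*} (D : ι → Set α) {s : Set ι} (hs : s.Finite)
    {A : Set α} (hA : A.Nonempty) (hcover : ∀ x ∈ A, ∀ y ∈ A, ∃ i ∈ s, x ∈ D i ∧ y ∈ D i)
    (hnot : ∀ i ∈ s, ¬ A ⊆ D i) :
    ∃ i ∈ s, ∃ j ∈ s, ∃ k ∈ s, i ≠ j ∧ i ≠ k ∧
      ∃ a b, a ∈ D i ∧ a ∈ D j ∧ b ∈ D i ∧ b ∈ D k ∧ b ∉ D j := by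
  obtain ⟨x, hx⟩ := hA
  obtain ⟨i₀, hi₀, hx₀, -⟩ := hcover x hx x hx
  obtain ⟨i, hi, hmax⟩ := Set.Finite.exists_maximalFor (fun i => A ∩ D i) s hs ⟨i₀, hi₀⟩
  obtain ⟨c, hcA, hci⟩ := Set.not_subset.1 (hnot i hi)
  obtain ⟨a, haA, hai⟩ : (A ∩ D i).Nonempty := by
    by_contra h
    have hi₀i : A ∩ D i₀ ⊆ A ∩ D i := hmax hi₀ fun y hy => (h ⟨y, hy⟩).elim
    exact h ⟨x, hi₀i ⟨hx, hx₀⟩⟩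
  obtain ⟨j, hj, haj, hcj⟩ := hcover a haA c hcA
  obtain ⟨b, ⟨hbA, hbi⟩, hbj⟩ : ∃ b ∈ A ∩ D i, b ∉ D j := by
    by_contra! h
    exact hci (hmax hj (fun b hb => ⟨hb.1, h b hb⟩) ⟨hcA, hcj⟩).2
  obtain ⟨k, hk, hbk, hck⟩ := hcover b hbA c hcA
  exact ⟨i, hi, j, hj, k, hk, fun h => hci (h ▸ hcj), fun h => hci (h ▸ hck),
    a, b, hai, haj, hbi, hbk, hbj⟩

namespace PhyloNet

namespace Network

open SimpleGraph

variable {X : Type} {N : Network X}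

lemma reach_refl (v : N.V) : N.reach v v := Relation.ReflTransGen.refl

lemma reach.trans {u v w : N.V} (h : N.reach u v) (h' : N.reach v w) : N.reach u w :=
  Relation.ReflTransGen.trans h h'

lemma reach_of_E {u v : N.V} (h : N.E u v) : N.reach u v := Relation.ReflTransGen.single h

lemma ne_of_E {u v : N.V} (h : N.E u v) : u ≠ v := by
  rintro rfl
  exact N.acyclic _ _ h (reach_refl _)

lemma adj_of_E {u v : N.V} (h : N.E u v) : N.UG.Adj u v := ⟨ne_of_E h, Or.inl h⟩

lemma reach_antisymm {u v : N.V} (h : N.reach u v) (h' : N.reach v u) : u = v := by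
  obtain rfl | ⟨c, hc, hcv⟩ := Relation.ReflTransGen.cases_head h
  · rfl
  · exact absurd (hcv.trans h') (N.acyclic _ _ hc)

lemma cluster_subset_of_reach {u v : N.V} (h : N.reach u v) : N.cluster v ⊆ N.cluster u :=
  fun _ hx => h.trans hx

lemma exists_reach_min (S : Set N.V) (hS : S.Nonempty) :
    ∃ v ∈ S, ∀ u ∈ S, N.reach v u → u = v := by
  obtain ⟨v, hv, hmin⟩ :=
    Set.Finite.exists_minimalFor (fun v => {w | N.reach v w}) S S.toFinite hS
  exact ⟨v, hv, fun u hu hvu =>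
    reach_antisymm (hmin hu (fun _ hw => hvu.trans hw) (reach_refl v)) hvu⟩

lemma exists_reach_max (S : Set N.V) (hS : S.Nonempty) :
    ∃ v ∈ S, ∀ u ∈ S, N.reach u v → u = v := by
  obtain ⟨v, hv, hmax⟩ :=
    Set.Finite.exists_maximalFor (fun v => {w | N.reach v w}) S S.toFinite hS
  exact ⟨v, hv, fun u hu huv =>
    reach_antisymm huv (hmax hu (fun _ hw => huv.trans hw) (reach_refl u))⟩

variable (N) in
lemma exists_reach_all : ∃ r : N.V, ∀ v, N.reach r v := by
  obtain ⟨r, -, hr⟩ := N.root_unique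
  refine ⟨r, fun v => ?_⟩
  obtain ⟨u, hu, hmax⟩ := exists_reach_max {u | N.reach u v} ⟨v, reach_refl v⟩
  have hur : u = r := hr u fun u' hu' =>
    ne_of_E hu' (hmax u' ((reach_of_E hu').trans hu) (reach_of_E hu'))
  exact hur ▸ hu

lemma isHybrid_of_E {m u₁ u₂ : N.V} (h₁ : N.E u₁ m) (h₂ : N.E u₂ m) (hne : u₁ ≠ u₂) :
    N.IsHybrid m := by
  have hsub : ({u₁, u₂} : Set N.V) ⊆ {u | N.E u m} := by
    rintro z (rfl | rfl) <;> assumption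
  have := Set.ncard_le_ncard hsub (Set.toFinite _)
  rwa [Set.ncard_pair hne] at this

lemma IsBiconn.preconnected_diff {S : Set N.V} (hS : N.IsBiconn S) (v : N.V) :
    (N.UG.induce (S \ {v})).Preconnected := by
  by_cases hv : v ∈ S
  · exact hS.2 v hv
  · rw [Set.sdiff_singleton_eq_self hv]
    exact hS.1.preconnected

lemma IsBiconn.union {S T : Set N.V} (hS : N.IsBiconn S) (hT : N.IsBiconn T) {a b : N.V}
    (ha : a ∈ S ∩ T) (hb : b ∈ S ∩ T) (hab : a ≠ b) : N.IsBiconn (S ∪ T) := by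
  refine ⟨induce_union_connected hS.1.preconnected hT.1.preconnected ⟨a, ha⟩, fun v _ => ?_⟩
  obtain ⟨c, hc, hcv⟩ : ∃ c ∈ S ∩ T, c ≠ v := by
    by_cases hav : a = v
    · exact ⟨b, hb, hav ▸ hab.symm⟩
    · exact ⟨a, ha, hav⟩
  rw [Set.union_sdiff_distrib]
  exact (induce_union_connected (hS.preconnected_diff v) (hT.preconnected_diff v)
    ⟨c, ⟨hc.1, hcv⟩, hc.2, hcv⟩).preconnected

lemma isBiconn_of_isPath {s t : N.V} {p q : N.UG.Walk s t} (hp : p.IsPath) (hq : q.IsPath)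
    (hpq : ∀ z ∈ p.support, z ∈ q.support → z = s ∨ z = t) :
    N.IsBiconn ({z | z ∈ p.support} ∪ {z | z ∈ q.support}) := by
  classical
  exact ⟨induce_union_connected p.connected_induce_support.preconnected
    q.connected_induce_support.preconnected ⟨s, p.start_mem_support, q.start_mem_support⟩,
    fun v _ => hp.induce_union_diff_preconnected hq hpq v⟩

lemma exists_isBlock_superset {S : Set N.V} (hS : N.IsBiconn S) : ∃ B, N.IsBlock B ∧ S ⊆ B := by
  obtain ⟨B, ⟨hSB, hB⟩, hmax⟩ :=
    Set.Finite.exists_maximalFor id {B | S ⊆ B ∧ N.IsBiconn B} (Set.toFinite _) ⟨S, subset_rfl, hS⟩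
  exact ⟨B, ⟨hB, fun B' hBB' hB' => (hmax ⟨hSB.trans hBB', hB'⟩ hBB').antisymm hBB'⟩, hSB⟩

lemma Level1.eq_of_isBiconn (hL1 : N.Level1) {S T : Set N.V} (hS : N.IsBiconn S)
    (hT : N.IsBiconn T) {a b m n : N.V} (ha : a ∈ S ∩ T) (hb : b ∈ S ∩ T) (hab : a ≠ b)
    (hmS : m ∈ S) (hnT : n ∈ T) (hm : N.IsHybrid m) (hn : N.IsHybrid n)
    (ham : N.reach a m) (han : N.reach a n) (ham' : a ≠ m) (han' : a ≠ n) : m = n := by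
  obtain ⟨B, hB, hSTB⟩ := exists_isBlock_superset (hS.union hT ha hb hab)
  exact hL1 B hB ⟨hSTB (Or.inl hmS), hm, a, hSTB (Or.inl ha.1), ham', ham⟩
    ⟨hSTB (Or.inr hnT), hn, a, hSTB (Or.inl ha.1), han', han⟩

-- Only the position of the vertices between the ends matters, not the direction of the edges.
def IsMonotonePath {u v : N.V} (W : N.UG.Walk u v) : Prop :=
  W.IsPath ∧ ∀ z ∈ W.support, N.reach u z ∧ N.reach z v

lemma IsMonotonePath.reach {u v : N.V} {W : N.UG.Walk u v} (hW : IsMonotonePath W) :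
    N.reach u v :=
  (hW.2 v W.end_mem_support).1

lemma exists_isMonotonePath {u v : N.V} (h : N.reach u v) :
    ∃ W : N.UG.Walk u v, IsMonotonePath W := by
  induction h using Relation.ReflTransGen.head_induction_on with
  | refl => exact ⟨.nil, by simp [IsMonotonePath, reach_refl]⟩
  | head e hrest ih =>
    obtain ⟨W, hW, hWint⟩ := ih
    refine ⟨.cons (adj_of_E e) W, hW.cons fun hu => N.acyclic _ _ e (hWint _ hu).1, ?_⟩
    simp only [Walk.support_cons, List.mem_cons, forall_eq_or_imp]
    exact ⟨⟨reach_refl _, (reach_of_E e).trans hrest⟩,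
      fun z hz => ⟨(reach_of_E e).trans (hWint z hz).1, (hWint z hz).2⟩⟩

lemma IsMonotonePath.append {u v w : N.V} {W₁ : N.UG.Walk u v} {W₂ : N.UG.Walk v w}
    (h₁ : IsMonotonePath W₁) (h₂ : IsMonotonePath W₂) : IsMonotonePath (W₁.append W₂) := by
  refine ⟨?_, fun z hz => ?_⟩
  · have h₂' := h₂.1.support_nodup
    rw [← Walk.cons_tail_support, List.nodup_cons] at h₂'
    rw [Walk.isPath_def, Walk.support_append]
    refine h₁.1.support_nodup.append h₂'.2 fun z hz₁ hz₂ => h₂'.1 ?_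
    exact reach_antisymm (h₁.2 z hz₁).2 (h₂.2 z (List.mem_of_mem_tail hz₂)).1 ▸ hz₂
  · rcases (Walk.mem_support_append_iff _ _).1 hz with hz | hz
    · exact ⟨(h₁.2 z hz).1, (h₁.2 z hz).2.trans h₂.reach⟩
    · exact ⟨h₁.reach.trans (h₂.2 z hz).1, (h₂.2 z hz).2⟩

def IsFork (w p q : N.V) : Prop :=
  ∃ (P : N.UG.Walk w p) (Q : N.UG.Walk w q), IsMonotonePath P ∧ IsMonotonePath Q ∧
    ∀ z ∈ P.support, z ∈ Q.support → z = w

lemma isFork_of_forall_eq {w p q : N.V} (hp : N.reach w p) (hq : N.reach w q)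
    (hmin : ∀ z, N.reach w z → N.reach z p → N.reach z q → z = w) : IsFork w p q := by
  obtain ⟨P, hP⟩ := exists_isMonotonePath hp
  obtain ⟨Q, hQ⟩ := exists_isMonotonePath hq
  exact ⟨P, Q, hP, hQ, fun z hzP hzQ => hmin z (hP.2 z hzP).1 (hP.2 z hzP).2 (hQ.2 z hzQ).2⟩

lemma isFork_of_E {w p q : N.V} (hp : N.E w p) (hq : N.E w q) (hpq : p ≠ q) : IsFork w p q := by
  refine ⟨.cons (adj_of_E hp) .nil, .cons (adj_of_E hq) .nil, ?_, ?_, ?_⟩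
  · simp [IsMonotonePath, ne_of_E hp, reach_refl, reach_of_E hp]
  · simp [IsMonotonePath, ne_of_E hq, reach_refl, reach_of_E hq]
  · simp [hpq]

def IsMaxCommonDesc (p q m : N.V) : Prop :=
  N.reach p m ∧ N.reach q m ∧ ∀ z, N.reach p z → N.reach q z → N.reach z m → z = m

lemma exists_isMaxCommonDesc {p q c : N.V} (hp : N.reach p c) (hq : N.reach q c) :
    ∃ m, IsMaxCommonDesc p q m ∧ N.reach m c := by
  obtain ⟨m, ⟨hpm, hqm, hmc⟩, hmax⟩ :=
    exists_reach_max {z | N.reach p z ∧ N.reach q z ∧ N.reach z c} ⟨c, hp, hq, reach_refl c⟩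
  exact ⟨m, ⟨hpm, hqm, fun z hpz hqz hzm => hmax z ⟨hpz, hqz, hzm.trans hmc⟩ hzm⟩, hmc⟩

lemma IsMaxCommonDesc.ne_left {p q m : N.V} (hm : IsMaxCommonDesc p q m)
    (hpq : IncompRel N.reach p q) : p ≠ m := by
  rintro rfl
  exact hpq.2 hm.2.1

lemma IsMaxCommonDesc.isHybrid {p q m : N.V} (hm : IsMaxCommonDesc p q m)
    (hpq : IncompRel N.reach p q) : N.IsHybrid m := by
  obtain rfl | ⟨u₁, hpu₁, hu₁m⟩ := Relation.ReflTransGen.cases_tail hm.1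
  · exact absurd hm.2.1 hpq.2
  obtain rfl | ⟨u₂, hqu₂, hu₂m⟩ := Relation.ReflTransGen.cases_tail hm.2.1
  · exact absurd hm.1 hpq.1
  refine isHybrid_of_E hu₁m hu₂m fun h => ne_of_E hu₁m ?_
  exact hm.2.2 u₁ hpu₁ (h ▸ hqu₂) (reach_of_E hu₁m)

lemma IsFork.exists_isBiconn {w p q m : N.V} (hf : IsFork w p q) (hpq : IncompRel N.reach p q)
    (hm : IsMaxCommonDesc p q m) : ∃ S, N.IsBiconn S ∧ w ∈ S ∧ p ∈ S ∧ m ∈ S := by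
  obtain ⟨P, Q, hP, hQ, hPQ⟩ := hf
  obtain ⟨α, hα⟩ := exists_isMonotonePath hm.1
  obtain ⟨β, hβ⟩ := exists_isMonotonePath hm.2.1
  have hdisj : ∀ z ∈ (P.append α).support, z ∈ (Q.append β).support → z = w ∨ z = m := by
    intro z hz₁ hz₂
    rcases (Walk.mem_support_append_iff _ _).1 hz₁ with hzP | hzα <;>
      rcases (Walk.mem_support_append_iff _ _).1 hz₂ with hzQ | hzβ
    · exact Or.inl (hPQ z hzP hzQ)
    · exact absurd ((hβ.2 z hzβ).1.trans (hP.2 z hzP).2) hpq.2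
    · exact absurd ((hα.2 z hzα).1.trans (hQ.2 z hzQ).2) hpq.1
    · exact Or.inr (hm.2.2 z (hα.2 z hzα).1 (hβ.2 z hzβ).1 (hα.2 z hzα).2)
  exact ⟨_, isBiconn_of_isPath (hP.append hα).1 (hQ.append hβ).1 hdisj,
    Or.inl (Walk.start_mem_support _),
    Or.inl ((Walk.mem_support_append_iff _ _).2 (Or.inl P.end_mem_support)),
    Or.inl (Walk.end_mem_support _)⟩

lemma Level1.isMaxCommonDesc_eq (hL1 : N.Level1) {w p q q' m m' : N.V} (hf : IsFork w p q)
    (hf' : IsFork w p q') (hpq : IncompRel N.reach p q) (hpq' : IncompRel N.reach p q')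
    (hm : IsMaxCommonDesc p q m) (hm' : IsMaxCommonDesc p q' m') : m = m' := by
  obtain ⟨S, hS, hwS, hpS, hmS⟩ := hf.exists_isBiconn hpq hm
  obtain ⟨T, hT, hwT, hpT, hm'T⟩ := hf'.exists_isBiconn hpq' hm'
  have hwp : w ≠ p := by
    rintro rfl
    obtain ⟨-, Q, -, hQ, -⟩ := hf
    exact hpq.1 hQ.reach
  exact hL1.eq_of_isBiconn hS hT ⟨hpS, hpT⟩ ⟨hwS, hwT⟩ hwp.symm hmS hm'T
    (hm.isHybrid hpq) (hm'.isHybrid hpq') hm.1 hm'.1 (hm.ne_left hpq) (hm'.ne_left hpq')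

variable (N) in
lemma exists_mem_LCA (A : Set X) : ∃ v, v ∈ N.LCA A := by
  obtain ⟨r, hr⟩ := N.exists_reach_all
  obtain ⟨v, hv, hmin⟩ := exists_reach_min {u | A ⊆ N.cluster u} ⟨r, fun x _ => hr _⟩
  exact ⟨v, hv, hmin⟩

lemma Level1.eq_of_mem_LCA (hL1 : N.Level1) {A : Set X} (hA : A.Nonempty) {p v : N.V}
    (hp : p ∈ N.LCA A) (hv : v ∈ N.LCA A) : p = v := by
  by_contra hne
  have hpv : IncompRel N.reach p v :=
    ⟨fun h => hne (hp.2 v hv.1 h).symm, fun h => hne (hv.2 p hp.1 h)⟩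
  obtain ⟨r, hr⟩ := N.exists_reach_all
  obtain ⟨w, ⟨hwp, hwv⟩, hwmin⟩ := exists_reach_min {u | N.reach u p ∧ N.reach u v} ⟨r, hr p, hr v⟩
  have hf : IsFork w p v := isFork_of_forall_eq hwp hwv fun z hwz hzp hzv => hwmin z ⟨hzp, hzv⟩ hwz
  obtain ⟨x₀, hx₀⟩ := hA
  obtain ⟨m, hm, -⟩ := exists_isMaxCommonDesc (hp.1 hx₀) (hv.1 hx₀)
  have hAm : A ⊆ N.cluster m := fun x hx => by
    obtain ⟨m', hm', hm'x⟩ := exists_isMaxCommonDesc (hp.1 hx) (hv.1 hx)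
    rwa [hL1.isMaxCommonDesc_eq hf hf hpv hpv hm hm']
  exact hpv.2 (hp.2 m hAm hm.1 ▸ hm.2.1)

lemma Level1.lcaNetwork (hL1 : N.Level1) : N.LcaNetwork := fun A hA => by
  obtain ⟨v, hv⟩ := N.exists_mem_LCA A
  exact ⟨v, Set.eq_singleton_iff_unique_mem.2 ⟨hv, fun p hp => hL1.eq_of_mem_LCA hA hp hv⟩⟩

def IsTopChild (v d : N.V) : Prop :=
  N.E v d ∧ ∀ d', N.E v d' → N.reach d' d → d' = d

lemma exists_isTopChild_reach {v c : N.V} (hc : N.E v c) :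
    ∃ d, IsTopChild v d ∧ N.reach d c := by
  obtain ⟨d, ⟨hvd, hdc⟩, hmax⟩ :=
    exists_reach_max {d | N.E v d ∧ N.reach d c} ⟨c, hc, reach_refl c⟩
  exact ⟨d, ⟨hvd, fun d' hvd' hd'd => hmax d' ⟨hvd', hd'd.trans hdc⟩ hd'd⟩, hdc⟩

lemma IsTopChild.incompRel {v d d' : N.V} (hd : IsTopChild v d) (hd' : IsTopChild v d')
    (hne : d ≠ d') : IncompRel N.reach d d' :=
  ⟨fun h => hne (hd'.2 d hd.1 h), fun h => hne (hd.2 d' hd'.1 h).symm⟩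

lemma exists_isTopChild_of_notMem_LCA {A : Set X} {v : N.V} (hA : A ⊆ N.cluster v)
    (hv : v ∉ N.LCA A) : ∃ d, IsTopChild v d ∧ A ⊆ N.cluster d := by
  obtain ⟨u, hAu, hvu, huv⟩ : ∃ u, A ⊆ N.cluster u ∧ N.reach v u ∧ u ≠ v := by
    simpa [LCA, hA] using hv
  obtain rfl | ⟨c, hvc, hcu⟩ := Relation.ReflTransGen.cases_head hvu
  · exact absurd rfl huv
  obtain ⟨d, hd, hdc⟩ := exists_isTopChild_reach hvc
  exact ⟨d, hd, hAu.trans (cluster_subset_of_reach (hdc.trans hcu))⟩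

lemma Level1.mem_cluster_of_isTopChild (hL1 : N.Level1) {v d₀ d₁ d₂ : N.V}
    (h₀ : IsTopChild v d₀) (h₁ : IsTopChild v d₁) (h₂ : IsTopChild v d₂)
    (h₀₁ : d₀ ≠ d₁) (h₀₂ : d₀ ≠ d₂) {a b : X} (ha₀ : a ∈ N.cluster d₀)
    (ha₁ : a ∈ N.cluster d₁) (hb₀ : b ∈ N.cluster d₀) (hb₂ : b ∈ N.cluster d₂) :
    b ∈ N.cluster d₁ := by
  obtain ⟨M₁, hM₁, -⟩ := exists_isMaxCommonDesc ha₀ ha₁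
  obtain ⟨M₂, hM₂, hM₂b⟩ := exists_isMaxCommonDesc hb₀ hb₂
  have hM : M₁ = M₂ := hL1.isMaxCommonDesc_eq (isFork_of_E h₀.1 h₁.1 h₀₁)
    (isFork_of_E h₀.1 h₂.1 h₀₂) (h₀.incompRel h₁ h₀₁) (h₀.incompRel h₂ h₀₂) hM₁ hM₂
  exact hM₁.2.1.trans (hM ▸ hM₂b)

end Network

open Network

theorem level1_strongLca_general (X : Type) (N : Network X)
    (hL1 : N.Level1) :
    N.StrongLca := by
  refine ⟨hL1.lcaNetwork, fun A hA => ?_⟩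
  obtain ⟨v, hv⟩ := hL1.lcaNetwork A hA
  have hvA : v ∈ N.LCA A := hv ▸ Set.mem_singleton v
  by_contra! hne
  have hcover : ∀ x ∈ A, ∀ y ∈ A,
      ∃ d ∈ {d | IsTopChild v d}, x ∈ N.cluster d ∧ y ∈ N.cluster d := by
    intro x hx y hy
    obtain ⟨g, hg⟩ := hL1.lcaNetwork {x, y} (Set.insert_nonempty x {y})
    have hvxy : v ∉ N.LCA {x, y} := fun h => by
      rw [hg, Set.mem_singleton_iff] at h
      exact hne x hx y hy (by rw [hg, hv, h])
    obtain ⟨d, hd, hsub⟩ :=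
      exists_isTopChild_of_notMem_LCA (Set.pair_subset (hvA.1 hx) (hvA.1 hy)) hvxy
    exact ⟨d, hd, hsub (Set.mem_insert x {y}), hsub (Set.mem_insert_of_mem x rfl)⟩
  have hnot : ∀ d ∈ {d | IsTopChild v d}, ¬ A ⊆ N.cluster d := fun d hd hAd =>
    ne_of_E hd.1 (hvA.2 d hAd (reach_of_E hd.1)).symm
  obtain ⟨d₀, h₀, d₁, h₁, d₂, h₂, h₀₁, h₀₂, a, b, ha₀, ha₁, hb₀, hb₂, hb₁⟩ :=
    exists_triple_of_pairwise_cover N.cluster (Set.toFinite _) hA hcover hnot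
  exact hb₁ (hL1.mem_cluster_of_isTopChild h₀ h₁ h₂ h₀₁ h₀₂ ha₀ ha₁ hb₀ hb₂)

/-- Every level-1 network is a strong lca-network: every nonempty
`A ⊆ X` has a unique least common ancestor, attained as the lca of a pair of
elements of `A`. -/
theorem level1_strongLca (X : Type) [Fintype X] (N : Network X)
    (hL1 : N.Level1) :
    N.StrongLca :=
  level1_strongLca_general X N hL1

end PhyloNet
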